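/- arXiv:2405.16409 — 2 statements merged into one kernel-verified Lean document; each statement's English description precedes it below -/
import Mathlib

section
/- If two MMILP-graphs are indistinguishable by the multipartite WL color refinement test (Algorithm WL_MMILP), then every GNN in the class F (built from input encoders, variable–constraint message-passing layers, and a readout) produces outputs on the two graphs that agree up to a permutation of the variable vertices. -/
open Finset
open scoped Classical

/-- The pair of (constraint-vertex, variable-vertex) color spaces of the canonical
WL_MMILP color refinement at each iteration: an iteration-`l+1` color consists of the
iteration-`l` color together with, for each (variable or constraint) group, the function
assigning to each iteration-`l` color of that group the total incident edge weight
carried into that color class. -/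
def MCol (p d : ℕ) : ℕ → Type × Type
  | 0 => ((Fin d → ℝ), (Fin d → ℝ))
  | l + 1 =>
      ((MCol p d l).1 × (Fin (p + 1) → (MCol p d l).2 → ℝ),
       (MCol p d l).2 × ((MCol p d l).1 → ℝ))

/-- An MMILP-graph with `p+1` variable groups `W_0,…,W_p` of sizes `n k`, `m` constraint
vertices, vertex features in `ℝ^d`, and real edge weights joining variable vertices with
constraint vertices only. -/
structure MMILPGraph (p m d : ℕ) (n : Fin (p + 1) → ℕ) where
  E : (k : Fin (p + 1)) → Fin (n k) → Fin m → ℝ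
  hW : (k : Fin (p + 1)) → Fin (n k) → Fin d → ℝ
  hV : Fin m → Fin d → ℝ

variable {p m d : ℕ} {n : Fin (p + 1) → ℕ}

/-- The WL_MMILP color refinement with canonical (perfectly injective) hash functions:
component `.1` gives the constraint-vertex colors, component `.2` the variable-vertex
colors of each group `W_k`. -/
noncomputable def wl (G : MMILPGraph p m d n) :
    (l : ℕ) → (Fin m → (MCol p d l).1) × ((k : Fin (p + 1)) → Fin (n k) → (MCol p d l).2)
  | 0 => (fun i => G.hV i, fun k j => G.hW k j)
  | l + 1 =>
      (fun i => ((wl G l).1 i,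
          fun k c => ∑ j : Fin (n k), if (wl G l).2 k j = c then G.E k j i else 0),
       fun k j => ((wl G l).2 k j,
          fun c => ∑ i : Fin m, if (wl G l).1 i = c then G.E k j i else 0))

/-- The WL_MMILP test cannot distinguish the two graphs after `L` iterations:
the multisets of final colors of every vertex group coincide. -/
def WLIndist (G Ghat : MMILPGraph p m d n) (L : ℕ) : Prop :=
  (Multiset.map (wl G L).1 Finset.univ.val = Multiset.map (wl Ghat L).1 Finset.univ.val) ∧
  ∀ k : Fin (p + 1),
    Multiset.map ((wl G L).2 k) Finset.univ.val =
      Multiset.map ((wl Ghat L).2 k) Finset.univ.val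

/-- The class `F` of multipartite GNNs: per-group input encoders, `L` rounds of
variable–constraint message passing with edge-weighted sum aggregation, and a readout on
the interdiction-variable group `W_0`. -/
structure MGNN (p d : ℕ) where
  L : ℕ
  e : ℕ
  encV : (Fin d → ℝ) → (Fin e → ℝ)
  encW : Fin (p + 1) → (Fin d → ℝ) → (Fin e → ℝ)
  fW : ℕ → Fin (p + 1) → (Fin e → ℝ) → (Fin e → ℝ)
  fV : ℕ → Fin (p + 1) → (Fin e → ℝ) → (Fin e → ℝ)
  gV : ℕ → (Fin e → ℝ) → (Fin e → ℝ) → (Fin e → ℝ)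
  gW : ℕ → Fin (p + 1) → (Fin e → ℝ) → (Fin e → ℝ) → (Fin e → ℝ)
  gout : (Fin e → ℝ) → ℝ

/-- Hidden features of the GNN on an MMILP-graph: `.1` for constraint vertices,
`.2` for variable vertices of each group. -/
noncomputable def MGNN.hid (N : MGNN p d) (G : MMILPGraph p m d n) :
    ℕ → (Fin m → Fin N.e → ℝ) × ((k : Fin (p + 1)) → Fin (n k) → Fin N.e → ℝ)
  | 0 => (fun i => N.encV (G.hV i), fun k j => N.encW k (G.hW k j))
  | l + 1 =>
      (fun i => N.gV l ((N.hid G l).1 i)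
          (∑ k : Fin (p + 1), ∑ j : Fin (n k), G.E k j i • N.fW l k ((N.hid G l).2 k j)),
       fun k j => N.gW l k ((N.hid G l).2 k j)
          (∑ i : Fin m, G.E k j i • N.fV l k ((N.hid G l).1 i)))

/-- The output of the GNN: readout applied to the final embeddings of the
interdiction-variable vertices `W_0`, one real value per `W_0` vertex. -/
noncomputable def MGNN.out (N : MGNN p d) (G : MMILPGraph p m d n) : Fin (n 0) → ℝ :=
  fun j => N.gout ((N.hid G N.L).2 0 j)

lemma exists_perm_of_multiset_map_eq {α : Type*} {nn : ℕ} {f g : Fin nn → α}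
    (h : Multiset.map f Finset.univ.val = Multiset.map g Finset.univ.val) :
    ∃ σ : Equiv.Perm (Fin nn), ∀ j, f j = g (σ j) := by
  have hc : ∀ a : α, Fintype.card { j // f j = a } = Fintype.card { j // g j = a } := by
    intro a
    have h1 := congrArg (Multiset.count a) h
    rw [Multiset.count_map, Multiset.count_map] at h1
    rw [Fintype.card_subtype, Fintype.card_subtype, Finset.card, Finset.card,
      Finset.filter_val, Finset.filter_val,
      Multiset.filter_congr (q := fun j => a = f j) (fun x _ => eq_comm),
      Multiset.filter_congr (q := fun j => a = g j) (fun x _ => eq_comm), h1]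
  have e : ∀ a : α, { j // f j = a } ≃ { j // g j = a } :=
    fun a => Fintype.equivOfCardEq (hc a)
  exact ⟨Equiv.ofFiberEquiv e, fun j => (Equiv.ofFiberEquiv_map e j).symm⟩

lemma hid_eq_of_wl (N : MGNN p d) (l : ℕ) :
    ∃ ΦV : (MCol p d l).1 → (Fin N.e → ℝ),
    ∃ ΦW : (k : Fin (p + 1)) → (MCol p d l).2 → (Fin N.e → ℝ),
    ∀ (G : MMILPGraph p m d n),
      (∀ i, (N.hid G l).1 i = ΦV ((wl G l).1 i)) ∧
      (∀ k j, (N.hid G l).2 k j = ΦW k ((wl G l).2 k j)) := by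
  induction l with
  | zero =>
    exact ⟨N.encV, N.encW, fun G => ⟨fun i => rfl, fun k j => rfl⟩⟩
  | succ l ih =>
    obtain ⟨ΦV, ΦW, hΦ⟩ := ih
    refine ⟨fun c => N.gV l (ΦV c.1)
        (∑ k : Fin (p + 1), ∑ᶠ c', c.2 k c' • N.fW l k (ΦW k c')),
      fun k c => N.gW l k (ΦW k c.1) (∑ᶠ c', c.2 c' • N.fV l k (ΦV c')),
      fun G => ⟨fun i => ?_, fun k j => ?_⟩⟩
    · have hmsg : ∀ k : Fin (p + 1),
          (∑ᶠ c', (∑ j : Fin (n k), if (wl G l).2 k j = c' then G.E k j i else 0)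
              • N.fW l k (ΦW k c'))
          = ∑ j : Fin (n k), G.E k j i • N.fW l k ((N.hid G l).2 k j) := by
        intro k
        have hsupp : ∀ j : Fin (n k), (Function.support fun c' =>
            (if (wl G l).2 k j = c' then G.E k j i else 0) • N.fW l k (ΦW k c')).Finite := by
          intro j
          apply Set.Finite.subset (Set.finite_singleton ((wl G l).2 k j))
          intro c' hc'
          simp only [Function.mem_support] at hc'
          simp only [Set.mem_singleton_iff]
          by_contra hne
          exact hc' (by rw [if_neg (Ne.symm hne), zero_smul])
        calc (∑ᶠ c', (∑ j : Fin (n k), if (wl G l).2 k j = c' then G.E k j i else 0)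
                • N.fW l k (ΦW k c'))
            = ∑ᶠ c', ∑ j : Fin (n k),
                (if (wl G l).2 k j = c' then G.E k j i else 0) • N.fW l k (ΦW k c') := by
              simp_rw [Finset.sum_smul]
          _ = ∑ j : Fin (n k), ∑ᶠ c',
                (if (wl G l).2 k j = c' then G.E k j i else 0) • N.fW l k (ΦW k c') :=
              (sum_finsum_comm _ _ (fun j _ => hsupp j)).symm
          _ = ∑ j : Fin (n k), G.E k j i • N.fW l k ((N.hid G l).2 k j) := by
              refine Finset.sum_congr rfl fun j _ => ?_
              rw [finsum_eq_single _ ((wl G l).2 k j)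
                (fun c' hc' => by rw [if_neg (Ne.symm hc'), zero_smul]),
                if_pos rfl, (hΦ G).2 k j]
      show N.gV l _ _ = _
      simp only [wl]
      rw [(hΦ G).1 i]
      exact congrArg _ (Finset.sum_congr rfl fun k _ => (hmsg k).symm)
    · have hmsg :
          (∑ᶠ c', (∑ i : Fin m, if (wl G l).1 i = c' then G.E k j i else 0)
              • N.fV l k (ΦV c'))
          = ∑ i : Fin m, G.E k j i • N.fV l k ((N.hid G l).1 i) := by
        have hsupp : ∀ i : Fin m, (Function.support fun c' =>
            (if (wl G l).1 i = c' then G.E k j i else 0) • N.fV l k (ΦV c')).Finite := by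
          intro i
          apply Set.Finite.subset (Set.finite_singleton ((wl G l).1 i))
          intro c' hc'
          simp only [Function.mem_support] at hc'
          simp only [Set.mem_singleton_iff]
          by_contra hne
          exact hc' (by rw [if_neg (Ne.symm hne), zero_smul])
        calc (∑ᶠ c', (∑ i : Fin m, if (wl G l).1 i = c' then G.E k j i else 0)
                • N.fV l k (ΦV c'))
            = ∑ᶠ c', ∑ i : Fin m,
                (if (wl G l).1 i = c' then G.E k j i else 0) • N.fV l k (ΦV c') := by
              simp_rw [Finset.sum_smul]
          _ = ∑ i : Fin m, ∑ᶠ c',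
                (if (wl G l).1 i = c' then G.E k j i else 0) • N.fV l k (ΦV c') :=
              (sum_finsum_comm _ _ (fun i _ => hsupp i)).symm
          _ = ∑ i : Fin m, G.E k j i • N.fV l k ((N.hid G l).1 i) := by
              refine Finset.sum_congr rfl fun i _ => ?_
              rw [finsum_eq_single _ ((wl G l).1 i)
                (fun c' hc' => by rw [if_neg (Ne.symm hc'), zero_smul]),
                if_pos rfl, (hΦ G).1 i]
      show N.gW l k _ _ = _
      simp only [wl]
      rw [(hΦ G).2 k j]
      exact congrArg _ hmsg.symm

/-- If two MMILP-graphs are indistinguishable by the WL_MMILP test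
(at every iteration count), then every GNN in the class `F` produces outputs on the two
graphs that agree up to a permutation of the `W_0` variable vertices. -/
theorem wl_indist_implies_gnn_equal_up_to_perm
    {p m d : ℕ} {n : Fin (p + 1) → ℕ} (G Ghat : MMILPGraph p m d n)
    (hWL : ∀ L : ℕ, WLIndist G Ghat L) :
    ∀ N : MGNN p d, ∃ σ : Equiv.Perm (Fin (n 0)),
      ∀ j : Fin (n 0), N.out G j = N.out Ghat (σ j) := by
  intro N
  obtain ⟨ΦV, ΦW, hΦ⟩ := hid_eq_of_wl (m := m) (n := n) N N.L
  have h := (hWL N.L).2 0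
  have hout : Multiset.map (N.out G) Finset.univ.val
      = Multiset.map (N.out Ghat) Finset.univ.val := by
    have hrw : ∀ Gg : MMILPGraph p m d n,
        N.out Gg = fun j => N.gout (ΦW 0 ((wl Gg N.L).2 0 j)) :=
      fun Gg => funext fun j => by rw [MGNN.out, (hΦ Gg).2 0 j]
    rw [hrw G, hrw Ghat]
    have h2 := congrArg (Multiset.map (fun c => N.gout (ΦW 0 c))) h
    simpa [Multiset.map_map, Function.comp_def] using h2
  exact exists_perm_of_multiset_map_eq hout
end

section
/- In the WL_MMILP/GNN correspondence, color-equality implies feature-equality propagates through layers: if for layer l−1, equal WL colors of vertices (within or across two graphs, in the same vertex group) imply equal GNN hidden features, and the layer-l update functions are as specified, then equal WL colors at layer l also imply equal GNN hidden features at layer l. -/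
open Finset
open scoped Classical

variable {p m d : ℕ} {n : Fin (p + 1) → ℕ}

/-! The GNN aggregation `∑ j, E j • f (h j)` depends on the neighbours only through the total
edge weight entering each color class, because by hypothesis `f ∘ h` is constant on color
classes (even across the two graphs); the refined WL color records exactly these class weights. -/

section ColorClassWeight

variable {R ι C M : Type*} [Semiring R] [AddCommMonoid M] [Module R M] [Fintype ι]

noncomputable def colorClassWeight (col : ι → C) (w : ι → R) (c : C) : R :=
  ∑ i, if col i = c then w i else 0

theorem sum_smul_comp_eq_sum_colorClassWeight_smul (col : ι → C) (w : ι → R) (u : C → M)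
    {T : Finset C} (hT : ∀ i, col i ∈ T) :
    ∑ i, w i • u (col i) = ∑ c ∈ T, colorClassWeight col w c • u c := by
  rw [← sum_fiberwise_of_maps_to fun i _ => hT i]
  refine sum_congr rfl fun c _ => ?_
  rw [colorClassWeight, ← sum_filter, sum_smul]
  exact sum_congr rfl fun i hi => by rw [(mem_filter.1 hi).2]

theorem sum_smul_comp_eq_of_colorClassWeight_eq (col₁ col₂ : ι → C) (w₁ w₂ : ι → R)
    (u : C → M) (hw : colorClassWeight col₁ w₁ = colorClassWeight col₂ w₂) :
    ∑ i, w₁ i • u (col₁ i) = ∑ i, w₂ i • u (col₂ i) := by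
  let T := univ.image col₁ ∪ univ.image col₂
  rw [sum_smul_comp_eq_sum_colorClassWeight_smul col₁ w₁ u (T := T) (by simp [T]),
    sum_smul_comp_eq_sum_colorClassWeight_smul col₂ w₂ u (T := T) (by simp [T]), hw]

theorem sum_smul_eq_of_colorClassWeight_eq {β : Type*} (col : β → ι → C) (v : β → ι → M)
    (hv : ∀ a b i i', col a i = col b i' → v a i = v b i') {a b : β} (w₁ w₂ : ι → R)
    (hw : colorClassWeight (col a) w₁ = colorClassWeight (col b) w₂) :
    ∑ i, w₁ i • v a i = ∑ i, w₂ i • v b i := by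
  have hfac : (Function.uncurry v).FactorsThrough (Function.uncurry col) :=
    fun x y h => hv x.1 y.1 x.2 y.2 h
  set u := Function.extend (Function.uncurry col) (Function.uncurry v) 0
  have hu : ∀ x i, v x i = u (col x i) := fun x i => (hfac.extend_apply 0 (x, i)).symm
  simp only [hu]
  exact sum_smul_comp_eq_of_colorClassWeight_eq _ _ w₁ w₂ u hw

end ColorClassWeight

/-- The induction step of the WL→GNN direction: if at layer `l`,
equality of WL colors of two vertices of the same group — within either graph or across
the two graphs `Gr true`, `Gr false` — implies equality of their GNN hidden features,
then the same implication holds at layer `l + 1`. -/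
theorem wl_color_eq_implies_feature_eq_step
    {p m d : ℕ} {n : Fin (p + 1) → ℕ} (Gr : Bool → MMILPGraph p m d n)
    (N : MGNN p d) (l : ℕ)
    (ihV : ∀ (a b : Bool) (i i' : Fin m),
      (wl (Gr a) l).1 i = (wl (Gr b) l).1 i' →
        (N.hid (Gr a) l).1 i = (N.hid (Gr b) l).1 i')
    (ihW : ∀ (a b : Bool) (k : Fin (p + 1)) (j j' : Fin (n k)),
      (wl (Gr a) l).2 k j = (wl (Gr b) l).2 k j' →
        (N.hid (Gr a) l).2 k j = (N.hid (Gr b) l).2 k j') :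
    (∀ (a b : Bool) (i i' : Fin m),
      (wl (Gr a) (l + 1)).1 i = (wl (Gr b) (l + 1)).1 i' →
        (N.hid (Gr a) (l + 1)).1 i = (N.hid (Gr b) (l + 1)).1 i') ∧
    (∀ (a b : Bool) (k : Fin (p + 1)) (j j' : Fin (n k)),
      (wl (Gr a) (l + 1)).2 k j = (wl (Gr b) (l + 1)).2 k j' →
        (N.hid (Gr a) (l + 1)).2 k j = (N.hid (Gr b) (l + 1)).2 k j') := by
  constructor
  · intro a b i i' h
    simp only [wl] at h
    obtain ⟨hcol, hweights⟩ := Prod.ext_iff.mp h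
    simp only [MGNN.hid, ihV a b i i' hcol]
    congr 1
    refine sum_congr rfl fun k _ => ?_
    exact sum_smul_eq_of_colorClassWeight_eq (fun x => (wl (Gr x) l).2 k)
      (fun x j => N.fW l k ((N.hid (Gr x) l).2 k j))
      (fun x y j j' h => congrArg (N.fW l k) (ihW x y k j j' h)) _ _ (congrFun hweights k)
  · intro a b k j j' h
    simp only [wl] at h
    obtain ⟨hcol, hweights⟩ := Prod.ext_iff.mp h
    simp only [MGNN.hid, ihW a b k j j' hcol]
    congr 1
    exact sum_smul_eq_of_colorClassWeight_eq (fun x => (wl (Gr x) l).1)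
      (fun x i => N.fV l k ((N.hid (Gr x) l).1 i))
      (fun x y i i' h => congrArg (N.fV l k) (ihV x y i i' h)) _ _ hweights
end
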